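/- Let T : ℓ∞/c₀ → ℓ∞/c₀ be a bounded linear operator which is a matrix operator (there exists a bounded linear operator R : ℓ∞ → ℓ∞ given by a c₀-matrix with Q ∘ R = T ∘ Q) and which is an isomorphic embedding (there exists M > 0 with ‖T x‖ ≥ M · ‖x‖ for all x ∈ ℓ∞/c₀). Then T is right-locally trivial: for every infinite A ⊆ ℕ there exist an infinite A₁ ⊆ A, an infinite B ⊆ ℕ, a nonzero real r, and a bijection σ : B → A₁ such that for every f ∈ ℓ∞ with f n = 0 for all n ∉ A₁ and every g ∈ ℓ∞ with Q g = T (Q f), for every ε > 0 the set {n ∈ B : |g n − r · f (σ n)| ≥ ε} is finite. -/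

import Mathlib

open Filter Topology

noncomputable section

/-- The Banach space `ℓ∞` of bounded real sequences with the sup norm. -/
abbrev ellInfty : Type := BoundedContinuousFunction ℕ ℝ

/-- `c₀`, the subspace of `ℓ∞` of sequences converging to `0`. -/
def czero : Submodule ℝ ellInfty where
  carrier := {f | Tendsto (⇑f) atTop (𝓝 (0 : ℝ))}
  add_mem' := by
    intro a b ha hb
    first
      | simpa [Pi.add_def] using ha.add hb
      | (have h := ha.add hb; rw [add_zero] at h; exact h)
  zero_mem' := by
    show Tendsto _ _ _
    simp only [BoundedContinuousFunction.coe_zero]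
    exact tendsto_const_nhds
  smul_mem' := by intro c f hf; simpa using hf.const_mul c

/-- The quotient Banach space `ℓ∞/c₀`; `czero.mkQ : ℓ∞ → ℓ∞/c₀` is the quotient map. -/
abbrev ellInftyModCzero : Type := ellInfty ⧸ czero

/-- A bounded operator `T` on `ℓ∞/c₀` is *locally null* if for every infinite `A ⊆ ℕ`
there is an infinite `A₁ ⊆ A` such that `T (Q f) = 0` for every `f ∈ ℓ∞` vanishing
outside of `A₁`. -/
def LocallyNull (T : ellInftyModCzero →L[ℝ] ellInftyModCzero) : Prop :=
  ∀ A : Set ℕ, A.Infinite → ∃ A₁ ⊆ A, A₁.Infinite ∧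
    ∀ f : ellInfty, (∀ n ∉ A₁, f n = 0) → T (czero.mkQ f) = 0

/-- `R : ℓ∞ → ℓ∞` is given by the `c₀`-matrix `b`: the rows of `b` are absolutely summable
with uniformly bounded `ℓ₁`-norms, the columns of `b` converge to `0`, and `R` acts by
matrix multiplication by `b`. -/
structure IsC0Matrix (R : ellInfty →L[ℝ] ellInfty) (b : ℕ → ℕ → ℝ) : Prop where
  rows_summable : ∀ i, Summable fun j => |b i j|
  rows_bounded : ∃ C : ℝ, ∀ i, (∑' j, |b i j|) ≤ C
  cols_vanish : ∀ j, Tendsto (fun i => b i j) atTop (𝓝 (0 : ℝ))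
  matrix_repr : ∀ f : ellInfty, ∀ i, R f i = ∑' j, b i j * f j

/-- `T` is *right-locally trivial*: for every infinite `A ⊆ ℕ` there are an infinite
`A₁ ⊆ A`, an infinite `B ⊆ ℕ`, a nonzero real `r` and a bijection `σ : B → A₁` such that
for every `f` supported in `A₁` and every representative `g` of `T [f]`, the sequence
`g` agrees with `r·(f ∘ σ)` on `B` up to a sequence converging to `0`. -/
def RightLocallyTrivial (T : ellInftyModCzero →L[ℝ] ellInftyModCzero) : Prop :=
  ∀ A : Set ℕ, A.Infinite → ∃ A₁ ⊆ A, A₁.Infinite ∧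
    ∃ B : Set ℕ, B.Infinite ∧ ∃ r : ℝ, r ≠ 0 ∧ ∃ σ : ℕ → ℕ, Set.BijOn σ B A₁ ∧
      ∀ f : ellInfty, (∀ n ∉ A₁, f n = 0) →
        ∀ g : ellInfty, czero.mkQ g = T (czero.mkQ f) →
          ∀ ε : ℝ, 0 < ε → {n | n ∈ B ∧ ε ≤ |g n - r * f (σ n)|}.Finite

/-!
Write `rowMass b i S` for the `ℓ₁`-mass of row `i` of `b` on the columns in `S`, and
`minMass b A` for the infimum of the numbers `d` such that, for some infinite `S ⊆ A`, all late
rows have mass at most `d` on `S`. Testing `T` on the indicator of such an `S` gives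
`minMass b A ≥ M > 0`.

Since the columns of `b` tend to `0` and its rows are summable, a gliding hump shows that on
every infinite `S ⊆ A` some late row has a single entry of size almost `minMass b A`; inside a
near-optimal `S` this entry carries almost all the mass of its row on `S`. Removing the column
and repeating yields rows `n k` and distinct columns `a k` of `A` such that the mass of row
`n k` on the other columns `a l` tends to `0`. Along a subsequence `b (n k) (a k) → r` with
`|r| ≥ minMass b A`, and then `A₁ = {a k}`, `B = {n k}`, `σ (n k) = a k` work.
-/

open Set Function

def rowMass (b : ℕ → ℕ → ℝ) (i : ℕ) (S : Set ℕ) : ℝ :=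
  ∑' j, S.indicator (fun j => |b i j|) j

section RowMass

variable {b : ℕ → ℕ → ℝ}

lemma rowMass_nonneg (i : ℕ) (S : Set ℕ) : 0 ≤ rowMass b i S :=
  tsum_nonneg fun j => indicator_nonneg (fun _ _ => abs_nonneg _) j

lemma rowMass_mono (hsum : ∀ i, Summable fun j => |b i j|) (i : ℕ) {S S' : Set ℕ}
    (h : S ⊆ S') : rowMass b i S ≤ rowMass b i S' :=
  ((hsum i).indicator S).tsum_le_tsum
    (fun j => indicator_le_indicator_of_subset h (fun _ => abs_nonneg _) j)
    ((hsum i).indicator S')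

lemma rowMass_le_tsum (hsum : ∀ i, Summable fun j => |b i j|) (i : ℕ) (S : Set ℕ) :
    rowMass b i S ≤ ∑' j, |b i j| :=
  ((hsum i).indicator S).tsum_le_tsum (fun j => indicator_le_self' (fun _ _ => abs_nonneg _) j)
    (hsum i)

lemma rowMass_union_le (hsum : ∀ i, Summable fun j => |b i j|) (i : ℕ) (S S' : Set ℕ) :
    rowMass b i (S ∪ S') ≤ rowMass b i S + rowMass b i S' := by
  have hpt (j : ℕ) : (S ∪ S').indicator (fun j => |b i j|) j ≤
      S.indicator (fun j => |b i j|) j + S'.indicator (fun j => |b i j|) j := by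
    have := congrFun (indicator_union_add_inter (fun j => |b i j|) S S') j
    simp only [Pi.add_apply] at this
    have h0 : 0 ≤ (S ∩ S').indicator (fun j => |b i j|) j :=
      indicator_nonneg (fun _ _ => abs_nonneg _) j
    linarith
  rw [rowMass, rowMass, rowMass, ← ((hsum i).indicator S).tsum_add ((hsum i).indicator S')]
  exact ((hsum i).indicator _).tsum_le_tsum hpt
    (((hsum i).indicator S).add ((hsum i).indicator S'))

lemma rowMass_eq_abs_add_rowMass_diff (hsum : ∀ i, Summable fun j => |b i j|) (i : ℕ)
    {S : Set ℕ} {j : ℕ} (hj : j ∈ S) :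
    rowMass b i S = |b i j| + rowMass b i (S \ {j}) := by
  classical
  rw [rowMass, ((hsum i).indicator S).tsum_eq_add_tsum_ite j, indicator_of_mem hj, rowMass]
  congr 1
  refine tsum_congr fun l => ?_
  by_cases hl : l = j
  · simp [hl]
  · by_cases hlS : l ∈ S <;> simp [hl, hlS]

lemma rowMass_coe_finset (i : ℕ) (F : Finset ℕ) : rowMass b i F = ∑ j ∈ F, |b i j| :=
  (sum_eq_tsum_indicator _ _).symm

lemma rowMass_range (i : ℕ) {s : ℕ → ℕ} (hs : Injective s) :
    rowMass b i (range s) = ∑' l, |b i (s l)| := by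
  rw [rowMass, ← tsum_subtype, tsum_range (fun j => |b i j|) hs]

lemma abs_tsum_mul_le_rowMass (hsum : ∀ i, Summable fun j => |b i j|) (i : ℕ) {S : Set ℕ}
    {f : ℕ → ℝ} {K : ℝ} (hK : ∀ j, |f j| ≤ K) (hS : ∀ j ∉ S, f j = 0) :
    |∑' j, b i j * f j| ≤ K * rowMass b i S := by
  rw [← Real.norm_eq_abs]
  refine tsum_of_norm_bounded (((hsum i).indicator S).hasSum.mul_left K) fun j => ?_
  by_cases hj : j ∈ S
  · rw [indicator_of_mem hj, Real.norm_eq_abs, abs_mul, mul_comm]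
    exact mul_le_mul_of_nonneg_right (hK j) (abs_nonneg _)
  · simp [hS j hj, indicator_of_notMem hj]

lemma abs_tsum_mul_sub_le_rowMass (hsum : ∀ i, Summable fun j => |b i j|) (i : ℕ) {S : Set ℕ}
    {f : ℕ → ℝ} {K : ℝ} (hK : ∀ j, |f j| ≤ K) (hS : ∀ j ∉ S, f j = 0) (j₀ : ℕ) :
    |∑' j, b i j * f j - b i j₀ * f j₀| ≤ K * rowMass b i (S \ {j₀}) := by
  classical
  have hsummable : Summable fun j => b i j * f j :=
    ((hsum i).mul_left K).of_norm_bounded fun j => by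
      rw [Real.norm_eq_abs, abs_mul, mul_comm]
      exact mul_le_mul_of_nonneg_right (hK j) (abs_nonneg _)
  have hK0 : 0 ≤ K := (abs_nonneg _).trans (hK j₀)
  have hdrop : ∑' j, (if j = j₀ then 0 else b i j * f j) =
      ∑' j, b i j * (if j = j₀ then 0 else f j) :=
    tsum_congr fun j => by split_ifs <;> simp
  rw [hsummable.tsum_eq_add_tsum_ite j₀, add_sub_cancel_left, hdrop]
  refine abs_tsum_mul_le_rowMass hsum i (fun j => ?_) (fun j hj => ?_)
  · split_ifs
    exacts [by simpa using hK0, hK j]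
  · split_ifs with hj₀
    exacts [rfl, hS j fun h => hj ⟨h, hj₀⟩]

end RowMass

section GlidingHump

variable {b : ℕ → ℕ → ℝ}

lemma eventually_sum_abs_lt (hcol : ∀ j, Tendsto (fun i => b i j) atTop (𝓝 0)) (F : Finset ℕ)
    {ε : ℝ} (hε : 0 < ε) : ∀ᶠ i in atTop, ∑ j ∈ F, |b i j| < ε := by
  have h := tendsto_finsetSum F fun j _ => (hcol j).abs
  simp only [abs_zero, Finset.sum_const_zero] at h
  exact h.eventually_lt_const hε

lemma exists_mem_abs_le_of_heavy (hsum : ∀ i, Summable fun j => |b i j|)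
    (hcol : ∀ j, Tendsto (fun i => b i j) atTop (𝓝 0)) {S : Set ℕ} (hS : S.Infinite)
    {ε δ : ℝ} (hε : 0 < ε) (hδ : 0 < δ) (L : ℕ) :
    ∃ s ∈ S, L ≤ s ∧ ∀ i, ε ≤ ∑ j ∈ Finset.range L, |b i j| → |b i s| ≤ δ := by
  obtain ⟨N, hN⟩ := eventually_atTop.1 (eventually_sum_abs_lt hcol (Finset.range L) hε)
  have hsmall : ∀ᶠ s in atTop, L ≤ s ∧ ∀ i ∈ Finset.range N, |b i s| ≤ δ :=
    (eventually_ge_atTop L).and <| (eventually_all_finset _).2 fun i _ =>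
      (hsum i).tendsto_atTop_zero.eventually_le_const hδ
  obtain ⟨s, hs, hLs, hsδ⟩ :=
    ((Nat.frequently_atTop_iff_infinite.2 hS).and_eventually hsmall).exists
  refine ⟨s, hs, hLs, fun i hi => hsδ i (Finset.mem_range.2 ?_)⟩
  by_contra! hiN
  exact (hN i hiN).not_ge hi

lemma sum_range_abs_le_of_gliding {i : ℕ} {s L : ℕ → ℕ} (hs : Injective s) {ε β : ℝ}
    (hε : 0 ≤ ε) (hsL : ∀ m, ∀ l < m, s l < L m)
    (hsmall : ∀ m, ε ≤ ∑ j ∈ Finset.range (L m), |b i j| → |b i (s m)| ≤ ε * (1 / 2) ^ (m + 1))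
    (hβ : ∀ m, |b i (s m)| ≤ β) (m : ℕ) :
    ∑ l ∈ Finset.range m, |b i (s l)| ≤ β + 2 * ε - ε * (1 / 2) ^ m := by
  induction m with
  | zero =>
    have := (abs_nonneg _).trans (hβ 0)
    simp only [Finset.range_zero, Finset.sum_empty, pow_zero, mul_one]
    linarith
  | succ m ih =>
    rw [Finset.sum_range_succ]
    by_cases heavy : ε ≤ ∑ j ∈ Finset.range (L m), |b i j|
    · have := hsmall m heavy
      linarith [show ε * (1 / 2 : ℝ) ^ (m + 1) = ε * (1 / 2) ^ m / 2 by ring]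
    · have hprev : ∑ l ∈ Finset.range m, |b i (s l)| ≤ ∑ j ∈ Finset.range (L m), |b i j| := by
        rw [← Finset.sum_image (f := fun j => |b i j|) hs.injOn]
        refine Finset.sum_le_sum_of_subset_of_nonneg ?_ fun _ _ _ => abs_nonneg _
        simpa [Finset.subset_iff] using hsL m
      have : ε * (1 / 2 : ℝ) ^ (m + 1) ≤ ε :=
        mul_le_of_le_one_right hε (pow_le_one₀ (by norm_num) (by norm_num))
      linarith [hβ m]

lemma exists_infinite_subset_rowMass_le (hsum : ∀ i, Summable fun j => |b i j|)
    (hcol : ∀ j, Tendsto (fun i => b i j) atTop (𝓝 0)) {S : Set ℕ} (hS : S.Infinite)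
    {ε β : ℝ} (hε : 0 < ε) {N : ℕ} (hβ : ∀ i ≥ N, ∀ j ∈ S, |b i j| ≤ β) :
    ∃ S' ⊆ S, S'.Infinite ∧ ∀ i ≥ N, rowMass b i S' ≤ β + 2 * ε := by
  choose next hnextS hnextL hnext using fun m =>
    exists_mem_abs_le_of_heavy hsum hcol hS hε (δ := ε * (1 / 2) ^ (m + 1)) (by positivity)
  let L : ℕ → ℕ := fun m => Nat.rec 0 (fun m l => next m l + 1) m
  let s : ℕ → ℕ := fun m => next m (L m)
  have hLs (m : ℕ) : L m ≤ s m := hnextL m (L m)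
  have hsL (m : ℕ) : s m < L (m + 1) := Nat.lt_succ_self _
  have hL : Monotone L := monotone_nat_of_le_succ fun m => ((hLs m).trans_lt (hsL m)).le
  have hs : StrictMono s := strictMono_nat_of_lt_succ fun m => (hsL m).trans_le (hLs (m + 1))
  refine ⟨range s, range_subset_iff.2 fun m => hnextS m _, infinite_range_of_injective hs.injective,
    fun i hi => ?_⟩
  rw [rowMass_range i hs.injective]
  refine Real.tsum_le_of_sum_range_le (fun _ => abs_nonneg _) fun m => ?_
  refine (sum_range_abs_le_of_gliding hs.injective hε.le
    (fun m l hl => (hsL l).trans_le (hL hl)) (fun m => hnext m (L m) i)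
    (fun m => hβ i hi _ (hnextS m _)) m).trans ?_
  exact sub_le_self _ (by positivity)

end GlidingHump

def massBounds (b : ℕ → ℕ → ℝ) (A : Set ℕ) : Set ℝ :=
  {d | ∃ S ⊆ A, S.Infinite ∧ ∀ᶠ i in atTop, rowMass b i S ≤ d}

def minMass (b : ℕ → ℕ → ℝ) (A : Set ℕ) : ℝ := sInf (massBounds b A)

section MinMass

variable {b : ℕ → ℕ → ℝ}

lemma massBounds_bddBelow (A : Set ℕ) : BddBelow (massBounds b A) :=
  ⟨0, fun _ ⟨S, _, _, hd⟩ => let ⟨i, hi⟩ := hd.exists; (rowMass_nonneg i S).trans hi⟩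

lemma mem_massBounds (hsum : ∀ i, Summable fun j => |b i j|) {C : ℝ}
    (hC : ∀ i, ∑' j, |b i j| ≤ C) {A : Set ℕ} (hA : A.Infinite) : C ∈ massBounds b A :=
  ⟨A, subset_rfl, hA, Eventually.of_forall fun i => (rowMass_le_tsum hsum i A).trans (hC i)⟩

lemma minMass_mono (hsum : ∀ i, Summable fun j => |b i j|) {C : ℝ}
    (hC : ∀ i, ∑' j, |b i j| ≤ C) {A A' : Set ℕ} (hA' : A'.Infinite) (h : A' ⊆ A) :
    minMass b A ≤ minMass b A' :=
  csInf_le_csInf (massBounds_bddBelow A) ⟨C, mem_massBounds hsum hC hA'⟩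
    fun _ ⟨S, hS, hSinf, hd⟩ => ⟨S, hS.trans h, hSinf, hd⟩

lemma frequently_exists_minMass_sub_lt_abs (hsum : ∀ i, Summable fun j => |b i j|)
    (hcol : ∀ j, Tendsto (fun i => b i j) atTop (𝓝 0)) {A S : Set ℕ} (hSA : S ⊆ A)
    (hS : S.Infinite) {ε : ℝ} (hε : 0 < ε) :
    ∃ᶠ i in atTop, ∃ j ∈ S, minMass b A - 3 * ε < |b i j| := by
  by_contra h
  obtain ⟨N, hN⟩ := eventually_atTop.1 (not_frequently.1 h)
  push Not at hN
  obtain ⟨S', hS'S, hS', hmass⟩ := exists_infinite_subset_rowMass_le hsum hcol hS hε hN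
  have hbound : minMass b A - ε ∈ massBounds b A :=
    ⟨S', hS'S.trans hSA, hS', eventually_atTop.2 ⟨N, fun i hi => by linarith [hmass i hi]⟩⟩
  have : minMass b A ≤ minMass b A - ε := csInf_le (massBounds_bddBelow A) hbound
  linarith

end MinMass

/-- A stage of the diagonal construction: the columns `S` still available, the entry
`(row, col)` chosen last, and the columns chosen so far. -/
structure Stage where
  S : Set ℕ
  infinite : S.Infinite
  row : ℕ
  col : ℕ
  used : Finset ℕ

structure Stage.IsSucc (b : ℕ → ℕ → ℝ) (ε : ℝ) (s t : Stage) : Prop where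
  subset : t.S ⊆ s.S
  col_mem : t.col ∈ s.S
  col_notMem : t.col ∉ t.S
  row_lt : s.row < t.row
  used_eq : t.used = insert t.col s.used
  large : minMass b s.S - 3 * ε < |b t.row t.col|
  offDiag : rowMass b t.row (t.S ∪ s.used) ≤ 5 * ε

def AlmostDiagonal (b : ℕ → ℕ → ℝ) (n a : ℕ → ℕ) : Prop :=
  Tendsto (fun k => rowMass b (n k) (range a \ {a k})) atTop (𝓝 0)

namespace Stage

variable {b : ℕ → ℕ → ℝ}

/-- Take a near-optimal `S₁ ⊆ S` and a late entry of `S₁` close to `minMass b S`: it carries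
all but `4ε` of its row's mass on `S₁`. -/
lemma exists_isSucc (hsum : ∀ i, Summable fun j => |b i j|) {C : ℝ}
    (hC : ∀ i, ∑' j, |b i j| ≤ C) (hcol : ∀ j, Tendsto (fun i => b i j) atTop (𝓝 0))
    {ε : ℝ} (hε : 0 < ε) (s : Stage) : ∃ t, s.IsSucc b ε t := by
  obtain ⟨d, ⟨S₁, hS₁, hS₁inf, hd⟩, hdlt⟩ := exists_lt_of_csInf_lt
    ⟨C, mem_massBounds hsum hC s.infinite⟩
    (show sInf (massBounds b s.S) < minMass b s.S + ε from lt_add_of_pos_right _ hε)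
  obtain ⟨i, ⟨j, hj, hlarge⟩, hrow, hmass, hused⟩ :=
    ((frequently_exists_minMass_sub_lt_abs hsum hcol hS₁ hS₁inf hε).and_eventually
      ((eventually_gt_atTop s.row).and (hd.and (eventually_sum_abs_lt hcol s.used hε)))).exists
  refine ⟨⟨S₁ \ {j}, hS₁inf.sdiff (finite_singleton j), i, j, insert j s.used⟩,
    sdiff_subset.trans hS₁, hS₁ hj, fun h => h.2 rfl, hrow, rfl, hlarge, ?_⟩
  have hsplit := rowMass_eq_abs_add_rowMass_diff hsum i hj
  calc rowMass b i (S₁ \ {j} ∪ s.used)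
      ≤ rowMass b i (S₁ \ {j}) + rowMass b i s.used := rowMass_union_le hsum i _ _
    _ ≤ 5 * ε := by rw [rowMass_coe_finset]; linarith

variable {c : ℕ → Stage} {ε : ℕ → ℝ}

lemma antitone_S (hc : ∀ k, (c k).IsSucc b (ε k) (c (k + 1))) : Antitone fun k => (c k).S :=
  antitone_nat_of_succ_le fun k => (hc k).subset

lemma col_mem_S (hc : ∀ k, (c k).IsSucc b (ε k) (c (k + 1))) {k l : ℕ} (h : k ≤ l) :
    (c (l + 1)).col ∈ (c k).S :=
  antitone_S hc h (hc l).col_mem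

lemma col_mem_used (hc : ∀ k, (c k).IsSucc b (ε k) (c (k + 1))) {k l : ℕ} (h : l < k) :
    (c (l + 1)).col ∈ (c k).used := by
  induction k, h using Nat.le_induction with
  | base => rw [(hc l).used_eq]; exact Finset.mem_insert_self _ _
  | succ k _ ih => rw [(hc k).used_eq]; exact Finset.mem_insert_of_mem ih

lemma strictMono_row (hc : ∀ k, (c k).IsSucc b (ε k) (c (k + 1))) :
    StrictMono fun k => (c (k + 1)).row :=
  strictMono_nat_of_lt_succ fun k => (hc (k + 1)).row_lt

lemma injective_col (hc : ∀ k, (c k).IsSucc b (ε k) (c (k + 1))) :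
    Injective fun k => (c (k + 1)).col :=
  Injective.of_lt_imp_ne fun k _ hkl he =>
    (hc k).col_notMem (he ▸ col_mem_S hc (Nat.succ_le_of_lt hkl))

lemma almostDiagonal (hsum : ∀ i, Summable fun j => |b i j|)
    (hc : ∀ k, (c k).IsSucc b (ε k) (c (k + 1))) (hε : Tendsto ε atTop (𝓝 0)) :
    AlmostDiagonal b (fun k => (c (k + 1)).row) (fun k => (c (k + 1)).col) := by
  have hsub (k : ℕ) : range (fun k => (c (k + 1)).col) \ {(c (k + 1)).col} ⊆
      (c (k + 1)).S ∪ (c k).used := by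
    rintro _ ⟨⟨l, rfl⟩, hne⟩
    rcases lt_or_gt_of_ne (fun h : l = k => hne (h ▸ rfl)) with hlk | hkl
    · exact Or.inr (col_mem_used hc hlk)
    · exact Or.inl (col_mem_S hc hkl)
  refine squeeze_zero (fun _ => rowMass_nonneg _ _)
    (fun k => (rowMass_mono hsum _ (hsub k)).trans (hc k).offDiag) ?_
  simpa using hε.const_mul 5

end Stage

section Extraction

variable {b : ℕ → ℕ → ℝ}

lemma AlmostDiagonal.comp_strictMono (hsum : ∀ i, Summable fun j => |b i j|) {n a φ : ℕ → ℕ}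
    (h : AlmostDiagonal b n a) (hφ : StrictMono φ) : AlmostDiagonal b (n ∘ φ) (a ∘ φ) :=
  squeeze_zero (fun _ => rowMass_nonneg _ _)
    (fun _ => rowMass_mono hsum _ (sdiff_subset_sdiff_left (range_comp_subset_range φ a)))
    (h.comp hφ.tendsto_atTop)

lemma exists_almostDiagonal (hsum : ∀ i, Summable fun j => |b i j|) {C : ℝ}
    (hC : ∀ i, ∑' j, |b i j| ≤ C) (hcol : ∀ j, Tendsto (fun i => b i j) atTop (𝓝 0))
    {A : Set ℕ} (hA : A.Infinite) :
    ∃ n a : ℕ → ℕ, StrictMono n ∧ Injective a ∧ range a ⊆ A ∧ AlmostDiagonal b n a ∧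
      ∀ k, minMass b A - 3 * (1 / 2) ^ k < |b (n k) (a k)| := by
  choose next hnext using fun k : ℕ =>
    Stage.exists_isSucc hsum hC hcol (ε := (1 / 2) ^ k) (by positivity)
  let c : ℕ → Stage := fun k => Nat.rec ⟨A, hA, 0, 0, ∅⟩ next k
  have hc (k : ℕ) : (c k).IsSucc b ((1 / 2) ^ k) (c (k + 1)) := hnext k (c k)
  refine ⟨_, _, Stage.strictMono_row hc, Stage.injective_col hc,
    range_subset_iff.2 fun k => Stage.col_mem_S hc k.zero_le,
    Stage.almostDiagonal hsum hc
      (tendsto_pow_atTop_nhds_zero_of_lt_one (by norm_num) (by norm_num)),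
    fun k => lt_of_le_of_lt ?_ (hc k).large⟩
  exact sub_le_sub_right
    (minMass_mono hsum hC (c k).infinite (Stage.antitone_S hc k.zero_le)) _

lemma exists_almostDiagonal_tendsto (hsum : ∀ i, Summable fun j => |b i j|) {C : ℝ}
    (hC : ∀ i, ∑' j, |b i j| ≤ C) (hcol : ∀ j, Tendsto (fun i => b i j) atTop (𝓝 0))
    {A : Set ℕ} (hA : A.Infinite) :
    ∃ (n a : ℕ → ℕ) (r : ℝ), StrictMono n ∧ Injective a ∧ range a ⊆ A ∧
      AlmostDiagonal b n a ∧ Tendsto (fun k => b (n k) (a k)) atTop (𝓝 r) ∧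
      minMass b A ≤ |r| := by
  obtain ⟨n, a, hn, ha, haA, hdiag, hlarge⟩ := exists_almostDiagonal hsum hC hcol hA
  have hbdd (k : ℕ) : b (n k) (a k) ∈ Metric.closedBall 0 C := by
    rw [mem_closedBall_zero_iff, Real.norm_eq_abs]
    exact ((hsum _).le_tsum (a k) fun _ _ => abs_nonneg _).trans (hC _)
  obtain ⟨r, -, φ, hφ, hr⟩ := tendsto_subseq_of_bounded Metric.isBounded_closedBall hbdd
  refine ⟨n ∘ φ, a ∘ φ, r, hn.comp hφ, ha.comp hφ.injective,
    (range_comp_subset_range φ a).trans haA, hdiag.comp_strictMono hsum hφ, hr, ?_⟩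
  have hε : Tendsto (fun k => 3 * (1 / 2 : ℝ) ^ φ k) atTop (𝓝 0) := by
    simpa using ((tendsto_pow_atTop_nhds_zero_of_lt_one (r := (1 / 2 : ℝ)) (by norm_num)
      (by norm_num)).comp hφ.tendsto_atTop).const_mul 3
  refine ge_of_tendsto' (f := fun k => |b (n (φ k)) (a (φ k))| + 3 * (1 / 2 : ℝ) ^ φ k)
    (by rw [← add_zero |r|]; exact hr.abs.add hε) fun k => ?_
  linarith [hlarge (φ k)]

end Extraction

section Quotient

lemma norm_mkQ_le_of_eventually {g : ellInfty} {d : ℝ} (hd : 0 ≤ d)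
    (h : ∀ᶠ i in atTop, |g i| ≤ d) : ‖czero.mkQ g‖ ≤ d := by
  obtain ⟨N, hN⟩ := eventually_atTop.1 h
  let t : ellInfty := BoundedContinuousFunction.indicator (Ici N) (isClopen_discrete _) * g
  have ht (i : ℕ) : t i = if N ≤ i then g i else 0 := by
    by_cases hi : N ≤ i <;> simp [t, hi]
  have hgt : czero.mkQ g = czero.mkQ t := by
    refine (Submodule.Quotient.eq czero).2 (tendsto_const_nhds.congr' ?_)
    filter_upwards [eventually_ge_atTop N] with i hi
    simp [ht, hi]
  rw [hgt]
  refine (Submodule.Quotient.norm_mk_le czero t).trans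
    ((BoundedContinuousFunction.norm_le hd).2 fun i => ?_)
  rw [ht, Real.norm_eq_abs]
  split_ifs with hi
  exacts [hN i hi, by simpa using hd]

lemma le_norm_mkQ_of_frequently {g : ellInfty} {c : ℝ} (h : ∃ᶠ i in atTop, c ≤ |g i|) :
    c ≤ ‖czero.mkQ g‖ := by
  refine QuotientAddGroup.le_norm_iff.2 fun m hm => le_of_forall_pos_lt_add fun δ hδ => ?_
  have hmg : Tendsto (fun i => |m i - g i|) atTop (𝓝 0) := by
    simpa using ((Submodule.Quotient.eq czero).1 hm : Tendsto (⇑(m - g)) atTop (𝓝 0)).abs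
  obtain ⟨i, hci, hi⟩ := (h.and_eventually (hmg.eventually_lt_const hδ)).exists
  calc c ≤ |g i| := hci
    _ ≤ |m i| + |m i - g i| := by
      linarith [abs_sub_abs_le_abs_sub (g i) (m i), abs_sub_comm (g i) (m i)]
    _ < ‖m‖ + δ := add_lt_add_of_le_of_lt (by simpa using m.norm_coe_le_norm i) hi

end Quotient

section MatrixOperator

variable {R : ellInfty →L[ℝ] ellInfty} {b : ℕ → ℕ → ℝ}

lemma le_minMass (hb : IsC0Matrix R b) {M : ℝ} (hM : 0 ≤ M)
    (hRM : ∀ f, M * ‖czero.mkQ f‖ ≤ ‖czero.mkQ (R f)‖) {A : Set ℕ} (hA : A.Infinite) :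
    M ≤ minMass b A := by
  obtain ⟨C, hC⟩ := hb.rows_bounded
  refine le_csInf ⟨C, mem_massBounds hb.rows_summable hC hA⟩ ?_
  rintro d ⟨S, -, hS, hd⟩
  let χ : ellInfty := BoundedContinuousFunction.indicator S (isClopen_discrete S)
  have hχ_abs (j : ℕ) : |χ j| ≤ 1 := by by_cases hj : j ∈ S <;> simp [χ, hj]
  have hQχ : 1 ≤ ‖czero.mkQ χ‖ :=
    le_norm_mkQ_of_frequently <| Nat.frequently_atTop_iff_infinite.2 <|
      hS.mono fun j hj => by simp [χ, hj]
  have hQRχ : ‖czero.mkQ (R χ)‖ ≤ d := by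
    refine norm_mkQ_le_of_eventually ?_ (hd.mono fun i hi => ?_)
    · obtain ⟨i, hi⟩ := hd.exists
      exact (rowMass_nonneg i S).trans hi
    · rw [hb.matrix_repr, ← one_mul d]
      refine (abs_tsum_mul_le_rowMass hb.rows_summable i hχ_abs fun j hj => ?_).trans
        (mul_le_mul_of_nonneg_left hi zero_le_one)
      simp [χ, hj]
  calc M ≤ M * ‖czero.mkQ χ‖ := le_mul_of_one_le_right hM hQχ
    _ ≤ ‖czero.mkQ (R χ)‖ := hRM χ
    _ ≤ d := hQRχ

lemma AlmostDiagonal.tendsto_apply_sub (hb : IsC0Matrix R b) {n a : ℕ → ℕ}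
    (hd : AlmostDiagonal b n a) {r : ℝ} (hr : Tendsto (fun k => b (n k) (a k)) atTop (𝓝 r))
    {f : ellInfty} (hf : ∀ j ∉ range a, f j = 0) :
    Tendsto (fun k => R f (n k) - r * f (a k)) atTop (𝓝 0) := by
  have hf_abs (j : ℕ) : |f j| ≤ ‖f‖ := by simpa using f.norm_coe_le_norm j
  refine squeeze_zero_norm (a := fun k => ‖f‖ * rowMass b (n k) (range a \ {a k}) +
    |b (n k) (a k) - r| * ‖f‖) (fun k => ?_) ?_
  · have hoff := abs_tsum_mul_sub_le_rowMass hb.rows_summable (n k) hf_abs hf (a k)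
    rw [← hb.matrix_repr] at hoff
    calc ‖R f (n k) - r * f (a k)‖
        = |(R f (n k) - b (n k) (a k) * f (a k)) + (b (n k) (a k) - r) * f (a k)| := by
          rw [Real.norm_eq_abs]; ring_nf
      _ ≤ _ := (abs_add_le _ _).trans <| add_le_add hoff <| by
          rw [abs_mul]; exact mul_le_mul_of_nonneg_left (hf_abs _) (abs_nonneg _)
  · simpa using (hd.const_mul ‖f‖).add ((hr.sub_const r).abs.mul_const ‖f‖)

end MatrixOperator

lemma bijOn_comp_invFun {α β γ : Type*} [Nonempty α] {n : α → β} {a : α → γ}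
    (hn : Injective n) (ha : Injective a) : BijOn (a ∘ invFun n) (range n) (range a) := by
  refine ⟨?_, ?_, ?_⟩
  · rintro _ ⟨k, rfl⟩
    exact mem_range_self _
  · rintro _ ⟨k, rfl⟩ _ ⟨l, rfl⟩ h
    simp only [comp_apply, leftInverse_invFun hn _] at h
    rw [ha h]
  · rintro _ ⟨k, rfl⟩
    exact ⟨n k, mem_range_self k, by simp [leftInverse_invFun hn k]⟩

lemma finite_setOf_le_abs_invFun {n : ℕ → ℕ} (hn : Injective n) {u : ℕ → ℕ → ℝ}
    (hu : Tendsto (fun k => u (n k) k) atTop (𝓝 0)) {ε : ℝ} (hε : 0 < ε) :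
    {m | m ∈ range n ∧ ε ≤ |u m (invFun n m)|}.Finite := by
  have hfin : {k | ε ≤ |u (n k) k|}.Finite := by
    have := (hu.abs.eventually_lt_const (by simpa using hε))
    simpa [← Nat.cofinite_eq_atTop] using this
  refine (hfin.image n).subset ?_
  rintro _ ⟨⟨k, rfl⟩, hk⟩
  exact ⟨k, by rwa [leftInverse_invFun hn k] at hk, rfl⟩

/-- Every matrix operator on `ℓ∞/c₀` which is an isomorphic embedding is
right-locally trivial. -/
theorem statement12 (T : ellInftyModCzero →L[ℝ] ellInftyModCzero)
    (hmat : ∃ (R : ellInfty →L[ℝ] ellInfty) (b : ℕ → ℕ → ℝ), IsC0Matrix R b ∧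
      ∀ f : ellInfty, czero.mkQ (R f) = T (czero.mkQ f))
    (hemb : ∃ M : ℝ, 0 < M ∧ ∀ x : ellInftyModCzero, M * ‖x‖ ≤ ‖T x‖) :
    RightLocallyTrivial T := by
  obtain ⟨R, b, hb, hRT⟩ := hmat
  obtain ⟨M, hM, hTM⟩ := hemb
  obtain ⟨C, hC⟩ := hb.rows_bounded
  intro A hA
  obtain ⟨n, a, r, hn, ha, haA, hdiag, hr, hminr⟩ :=
    exists_almostDiagonal_tendsto hb.rows_summable hC hb.cols_vanish hA
  have hMr : M ≤ |r| :=
    (le_minMass hb hM.le (fun f => hRT f ▸ hTM _) hA).trans hminr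
  refine ⟨range a, haA, infinite_range_of_injective ha, range n,
    infinite_range_of_injective hn.injective, r, abs_pos.1 (hM.trans_le hMr), a ∘ invFun n,
    bijOn_comp_invFun hn.injective ha, fun f hf g hg ε hε => ?_⟩
  have hgRf : g - R f ∈ czero := (Submodule.Quotient.eq czero).1 (by rw [← hRT] at hg; exact hg)
  refine finite_setOf_le_abs_invFun hn.injective (u := fun m k => g m - r * f (a k)) ?_ hε
  simpa using ((hgRf : Tendsto _ _ _).comp hn.tendsto_atTop).add
    (hdiag.tendsto_apply_sub hb hr hf)
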